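/- With α = 1/2, φ₁(x) = (1/4) sin(x/2) and φ₂(x) = (1/12) sin(x/2) − (3/32) sin(3x/2), the identity (α+2)² φ₂(x) + φ₂''(x) = −[(α+2)(α+1) cos(x) φ₁(x) − sin(x) φ₁'(x) + cos(x) φ₁''(x)] holds for all real x, and φ₂'(−π) = φ₂'(π) = 0. -/

import Mathlib

open Real

noncomputable def phi011 : ℝ → ℝ := fun x => (1/4) * Real.sin (x/2)
noncomputable def phi012 : ℝ → ℝ := fun x => (1/12) * Real.sin (x/2) - (3/32) * Real.sin (3*x/2)

/-! In the half angle `θ = x / 2` every function involved is a polynomial in `sin θ` and `cos θ`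
(triple- and double-angle formulas), and the shadow equation becomes a polynomial identity modulo
`sin θ ^ 2 + cos θ ^ 2 = 1`. The Neumann conditions hold because `φ₂'` is a combination of
`cos (x / 2)` and `cos (3 x / 2) = 4 cos³ (x / 2) - 3 cos (x / 2)`, both vanishing at `x = ±π`. -/

lemma deriv_phi011 : deriv phi011 = fun x => 1/8 * cos (x/2) := by
  funext x
  exact ((((hasDerivAt_id' x).div_const 2).sin).const_mul (1/4 : ℝ)).deriv.trans (by ring)

lemma deriv_deriv_phi011 : deriv (deriv phi011) = fun x => -(1/16) * sin (x/2) := by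
  rw [deriv_phi011]
  funext x
  exact ((((hasDerivAt_id' x).div_const 2).cos).const_mul (1/8 : ℝ)).deriv.trans (by ring)

lemma deriv_phi012 : deriv phi012 = fun x => 1/24 * cos (x/2) - 9/64 * cos (3*x/2) := by
  funext x
  exact (((((hasDerivAt_id' x).div_const 2).sin).const_mul (1/12 : ℝ)).sub
    ((((hasDerivAt_id' x).const_mul 3).div_const 2).sin.const_mul (3/32 : ℝ))).deriv.trans
      (by ring)

lemma deriv_deriv_phi012 :
    deriv (deriv phi012) = fun x => -(1/48) * sin (x/2) + 27/128 * sin (3*x/2) := by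
  rw [deriv_phi012]
  funext x
  exact (((((hasDerivAt_id' x).div_const 2).cos).const_mul (1/24 : ℝ)).sub
    ((((hasDerivAt_id' x).const_mul 3).div_const 2).cos.const_mul (9/64 : ℝ))).deriv.trans
      (by ring)

lemma second_shadow_identity_half_angle (θ : ℝ) :
    (5/2 : ℝ)^2 * (1/12 * sin θ - 3/32 * sin (3*θ)) + (-(1/48) * sin θ + 27/128 * sin (3*θ)) =
      -(5/2 * (3/2) * cos (2*θ) * (1/4 * sin θ) - sin (2*θ) * (1/8 * cos θ)
        + cos (2*θ) * (-(1/16) * sin θ)) := by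
  rw [sin_two_mul, cos_two_mul, sin_three_mul]
  linear_combination (3/2) * sin θ * sin_sq_add_cos_sq θ

lemma deriv_phi012_eq_zero_of_cos_half_eq_zero {x : ℝ} (hx : cos (x/2) = 0) :
    deriv phi012 x = 0 := by
  simp only [deriv_phi012, show 3*x/2 = 3*(x/2) by ring, cos_three_mul, hx]
  ring

theorem crack_second_shadow_j1 :
    (∀ x : ℝ, ((1/2 : ℝ) + 2)^2 * phi012 x + deriv (deriv phi012) x =
      -(((1/2 : ℝ) + 2) * ((1/2 : ℝ) + 1) * Real.cos x * phi011 x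
        - Real.sin x * deriv phi011 x + Real.cos x * deriv (deriv phi011) x)) ∧
    deriv phi012 (-π) = 0 ∧ deriv phi012 π = 0 := by
  refine ⟨fun x => ?_, ?_, ?_⟩
  · obtain ⟨θ, rfl⟩ : ∃ θ, x = 2 * θ := ⟨x / 2, by ring⟩
    rw [deriv_deriv_phi012, deriv_deriv_phi011, deriv_phi011]
    simp only [phi011, phi012, show 2 * θ / 2 = θ by ring, show 3 * (2 * θ) / 2 = 3 * θ by ring]
    linear_combination second_shadow_identity_half_angle θ
  · exact deriv_phi012_eq_zero_of_cos_half_eq_zero (by rw [neg_div, cos_neg, cos_pi_div_two])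
  · exact deriv_phi012_eq_zero_of_cos_half_eq_zero cos_pi_div_two
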